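/- Assume inf_{x,y∈S} κ(x,y) > 0, sup_{x,y∈S} κ(x,y) < ∞, ∫_S e^{a ψ(x)} dμ(x) < ∞ for some a > 0 where ψ(x) = (∫_S κ(x,y)² dμ(y))^{1/2}, and ‖T_κ‖ < 1. Then there exist z > 1 and a μ-a.e. finite measurable function f ≥ 1 satisfying f = z·e^{T_κ[f−1]} μ-a.e. -/

import Mathlib

open MeasureTheory Filter
open scoped ENNReal

/-- Extended exponential on `ℝ≥0∞`, with `eexp ⊤ = ⊤`. -/
noncomputable def eexp (t : ℝ≥0∞) : ℝ≥0∞ :=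
  if t = ⊤ then ⊤ else ENNReal.ofReal (Real.exp t.toReal)

/-- The nonlinear operator `Φ_{z,κ}[f](x) = z·exp(T_κ[f-1](x))`. -/
noncomputable def Phi {S : Type*} [MeasurableSpace S] (μ : Measure S)
    (κ : S → S → ℝ) (z : ℝ) (f : S → ℝ≥0∞) : S → ℝ≥0∞ :=
  fun x => ENNReal.ofReal z * eexp (∫⁻ y, ENNReal.ofReal (κ x y) * (f y - 1) ∂μ)

/-- The `L²(μ)` operator norm of the integral operator `T_κ`, as a supremum over
nonnegative functions of `L²`-norm at most one. -/
noncomputable def opNorm {S : Type*} [MeasurableSpace S] (μ : Measure S)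
    (κ : S → S → ℝ) : ℝ≥0∞ :=
  ⨆ (f : S → ℝ≥0∞) (_ : Measurable f) (_ : (∫⁻ x, f x ^ 2 ∂μ) ^ ((1 : ℝ) / 2) ≤ 1),
    (∫⁻ x, (∫⁻ y, ENNReal.ofReal (κ x y) * f y ∂μ) ^ 2 ∂μ) ^ ((1 : ℝ) / 2)

/-!
Iterate `Φ = Phi μ κ z` starting from `f₀ = 1`. If `κ ≤ B` and `‖f - 1‖₂ ≤ c`, then, `μ` being a
probability measure, `T_κ[f - 1] ≤ B c` pointwise. Convexity of `exp` gives
`z e^s - 1 ≤ (z - 1) e^{Bc} + e^{Bc} s` for `0 ≤ s ≤ Bc`, so by Minkowski's inequality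
`‖Φ[f] - 1‖₂ ≤ (z - 1) e^{Bc} + e^{Bc} ‖T_κ‖ c`. Since `‖T_κ‖ < 1`, choosing `c` small and then
`z > 1` close to `1` makes this at most `c`: the iterates stay in the ball `‖f - 1‖₂ ≤ c`, where they
are bounded by `z e^{Bc}`. They increase because `Φ` is monotone and `1 ≤ Φ[1]`, and by monotone
convergence their supremum is a fixed point of `Φ`.
-/

lemma eexp_eq_exp_comp_coe : eexp = EReal.exp ∘ (↑) := by
  funext t
  rcases eq_or_ne t ⊤ with rfl | ht
  · simp [eexp]
  · rw [eexp, if_neg ht, Function.comp_apply, ← EReal.coe_ennreal_toReal ht, EReal.exp_coe]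

lemma continuous_eexp : Continuous eexp :=
  eexp_eq_exp_comp_coe ▸ EReal.expHomeomorph.continuous.comp continuous_coe_ennreal_ereal

lemma monotone_eexp : Monotone eexp :=
  eexp_eq_exp_comp_coe ▸ EReal.exp_monotone.comp fun _ _ => EReal.coe_ennreal_le_coe_ennreal_iff.mpr

lemma eexp_iSup {ι : Sort*} [Nonempty ι] (t : ι → ℝ≥0∞) : eexp (⨆ i, t i) = ⨆ i, eexp (t i) :=
  monotone_eexp.map_ciSup_of_continuousAt continuous_eexp.continuousAt

lemma eexp_ofReal {s : ℝ} (hs : 0 ≤ s) :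
    eexp (ENNReal.ofReal s) = ENNReal.ofReal (Real.exp s) := by
  rw [eexp, if_neg ENNReal.ofReal_ne_top, ENNReal.toReal_ofReal hs]

lemma one_le_eexp (t : ℝ≥0∞) : 1 ≤ eexp t := by
  have h0 : eexp 0 = 1 := by simp [eexp]
  exact h0 ▸ monotone_eexp zero_le

lemma Real.exp_sub_one_le_mul_exp (s : ℝ) : Real.exp s - 1 ≤ s * Real.exp s := by
  have h := mul_le_mul_of_nonneg_right (Real.one_sub_le_exp_neg s) (Real.exp_pos s).le
  rw [← Real.exp_add, neg_add_cancel, Real.exp_zero] at h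
  linarith

lemma Real.mul_exp_sub_one_le {z s m : ℝ} (hz : 1 ≤ z) (hs : 0 ≤ s) (hsm : s ≤ m) :
    z * Real.exp s - 1 ≤ (z - 1) * Real.exp m + Real.exp m * s := by
  have hexp : Real.exp s ≤ Real.exp m := Real.exp_le_exp.mpr hsm
  nlinarith [Real.exp_sub_one_le_mul_exp s]

section Scalar

variable {z m : ℝ} {t : ℝ≥0∞}

lemma exists_ofReal_of_le_ofReal (hm : 0 ≤ m) (ht : t ≤ ENNReal.ofReal m) :
    ∃ s : ℝ, 0 ≤ s ∧ s ≤ m ∧ t = ENNReal.ofReal s := by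
  have ht' : t ≠ ⊤ := ne_top_of_le_ne_top ENNReal.ofReal_ne_top ht
  exact ⟨t.toReal, ENNReal.toReal_nonneg, ENNReal.toReal_le_of_le_ofReal hm ht,
    (ENNReal.ofReal_toReal ht').symm⟩

lemma one_le_ofReal_mul_eexp (hz : 1 ≤ z) : 1 ≤ ENNReal.ofReal z * eexp t :=
  one_mul (1 : ℝ≥0∞) ▸ mul_le_mul' (ENNReal.one_le_ofReal.mpr hz) (one_le_eexp t)

lemma ofReal_mul_eexp_le (hm : 0 ≤ m) (ht : t ≤ ENNReal.ofReal m) :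
    ENNReal.ofReal z * eexp t ≤ ENNReal.ofReal (z * Real.exp m) := by
  rw [ENNReal.ofReal_mul' (Real.exp_pos m).le, ← eexp_ofReal hm]
  exact mul_le_mul_right (monotone_eexp ht) _

lemma ofReal_mul_eexp_sub_one_le (hz : 1 ≤ z) (hm : 0 ≤ m) (ht : t ≤ ENNReal.ofReal m) :
    ENNReal.ofReal z * eexp t - 1
      ≤ ENNReal.ofReal ((z - 1) * Real.exp m) + ENNReal.ofReal (Real.exp m) * t := by
  obtain ⟨s, hs, hsm, rfl⟩ := exists_ofReal_of_le_ofReal hm ht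
  rw [eexp_ofReal hs, ← ENNReal.ofReal_mul (by linarith), ← ENNReal.ofReal_one,
    ← ENNReal.ofReal_sub _ zero_le_one, ← ENNReal.ofReal_mul (Real.exp_pos m).le,
    ← ENNReal.ofReal_add (mul_nonneg (by linarith) (Real.exp_pos m).le)
      (mul_nonneg (Real.exp_pos m).le hs)]
  exact ENNReal.ofReal_le_ofReal (Real.mul_exp_sub_one_le hz hs hsm)

end Scalar

lemma exists_radius_and_parameter {B ρ : ℝ} (hρ : ρ < 1) :
    ∃ c > 0, ∃ z > 1, (z - 1) * Real.exp (B * c) + Real.exp (B * c) * (ρ * c) ≤ c := by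
  have hlim : Tendsto (fun c => Real.exp (B * c) * ρ) (nhdsWithin 0 (Set.Ioi 0)) (nhds ρ) := by
    have hcont : Continuous fun c => Real.exp (B * c) * ρ := by fun_prop
    simpa using (hcont.tendsto 0).mono_left nhdsWithin_le_nhds
  obtain ⟨c, hsmall, hc⟩ := ((hlim.eventually (gt_mem_nhds hρ)).and self_mem_nhdsWithin).exists
  have hexp := Real.exp_pos (B * c)
  refine ⟨c, hc, 1 + c * (1 - Real.exp (B * c) * ρ) / Real.exp (B * c), ?_, le_of_eq ?_⟩
  · have : 0 < c * (1 - Real.exp (B * c) * ρ) / Real.exp (B * c) :=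
      div_pos (mul_pos hc (by linarith)) hexp
    linarith
  · field_simp
    ring

section LpNorm

variable {S : Type*} [MeasurableSpace S] {μ : Measure S}

lemma eLpNorm_two_eq (f : S → ℝ≥0∞) :
    eLpNorm f 2 μ = (∫⁻ x, f x ^ 2 ∂μ) ^ ((1 : ℝ) / 2) := by
  rw [eLpNorm_eq_lintegral_rpow_enorm_toReal two_ne_zero ENNReal.ofNat_ne_top]
  simp

lemma eLpNorm_mono_ennreal {f g : S → ℝ≥0∞} (h : f ≤ g) (p : ℝ≥0∞) :
    eLpNorm f p μ ≤ eLpNorm g p μ :=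
  eLpNorm_mono_enorm h

lemma eLpNorm_const_mul_le {c : ℝ≥0∞} (hc : c ≠ ⊤) (f : S → ℝ≥0∞) (p : ℝ≥0∞) :
    eLpNorm (fun x => c * f x) p μ ≤ c * eLpNorm f p μ := by
  lift c to NNReal using hc
  exact eLpNorm_le_nnreal_smul_eLpNorm_of_ae_le_mul' (.of_forall fun _ => le_rfl) p

lemma eLpNorm_const_add_le [IsProbabilityMeasure μ] {p : ℝ≥0∞} (hp : 1 ≤ p) (a : ℝ≥0∞)
    {g : S → ℝ≥0∞} (hg : AEMeasurable g μ) :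
    eLpNorm (fun x => a + g x) p μ ≤ a + eLpNorm g p μ := by
  have hadd := eLpNorm_add_le (f := fun _ => a) (g := g) (μ := μ) aestronglyMeasurable_const
    hg.aestronglyMeasurable hp
  rwa [eLpNorm_const _ (by positivity) (IsProbabilityMeasure.ne_zero μ), measure_univ,
    ENNReal.one_rpow, mul_one, enorm_eq_self] at hadd

lemma lintegral_le_eLpNorm_two [IsProbabilityMeasure μ] {f : S → ℝ≥0∞} (hf : Measurable f) :
    ∫⁻ x, f x ∂μ ≤ eLpNorm f 2 μ := by
  simpa [eLpNorm_one_eq_lintegral_enorm] using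
    eLpNorm_le_eLpNorm_of_exponent_le (p := 1) (q := 2) one_le_two hf.aestronglyMeasurable

end LpNorm

section Operator

variable {S : Type*} [MeasurableSpace S] {μ : Measure S} {κ : S → S → ℝ}

noncomputable def kernelOp (μ : Measure S) (κ : S → S → ℝ) (f : S → ℝ≥0∞) : S → ℝ≥0∞ :=
  fun x => ∫⁻ y, ENNReal.ofReal (κ x y) * f y ∂μ

lemma Phi_eq_kernelOp (z : ℝ) (f : S → ℝ≥0∞) :
    Phi μ κ z f = fun x => ENNReal.ofReal z * eexp (kernelOp μ κ (f - 1) x) :=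
  rfl

lemma measurable_kernelOp [SFinite μ] (hκ : Measurable (Function.uncurry κ))
    {f : S → ℝ≥0∞} (hf : Measurable f) : Measurable (kernelOp μ κ f) :=
  ((ENNReal.measurable_ofReal.comp hκ).mul (hf.comp measurable_snd)).lintegral_prod_right

lemma monotone_kernelOp : Monotone (kernelOp μ κ) :=
  fun _ _ hfg _ => lintegral_mono fun y => mul_le_mul_right (hfg y) _

lemma kernelOp_const_mul {c : ℝ≥0∞} (hc : c ≠ ⊤) (f : S → ℝ≥0∞) :
    kernelOp μ κ (fun y => c * f y) = fun x => c * kernelOp μ κ f x := by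
  funext x
  simp_rw [kernelOp, mul_left_comm _ c]
  exact lintegral_const_mul' c _ hc

lemma kernelOp_iSup (hκ : Measurable (Function.uncurry κ)) {F : ℕ → S → ℝ≥0∞}
    (hF : ∀ n, Measurable (F n)) (hmono : Monotone F) :
    kernelOp μ κ (⨆ n, F n) = ⨆ n, kernelOp μ κ (F n) := by
  funext x
  simp only [kernelOp, iSup_apply, ENNReal.mul_iSup]
  exact lintegral_iSup (fun n => hκ.of_uncurry_left.ennreal_ofReal.mul (hF n))
    fun m n hmn y => mul_le_mul_right (hmono hmn y) _

lemma kernelOp_le_mul_eLpNorm [IsProbabilityMeasure μ] {B : ℝ} (hB : ∀ x y, κ x y ≤ B)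
    {f : S → ℝ≥0∞} (hf : Measurable f) (x : S) :
    kernelOp μ κ f x ≤ ENNReal.ofReal B * eLpNorm f 2 μ :=
  calc kernelOp μ κ f x ≤ ∫⁻ y, ENNReal.ofReal B * f y ∂μ :=
        lintegral_mono fun y => mul_le_mul_left (ENNReal.ofReal_le_ofReal (hB x y)) _
    _ = ENNReal.ofReal B * ∫⁻ y, f y ∂μ := lintegral_const_mul _ hf
    _ ≤ ENNReal.ofReal B * eLpNorm f 2 μ := mul_le_mul_right (lintegral_le_eLpNorm_two hf) _

lemma eLpNorm_kernelOp_le_opNorm {f : S → ℝ≥0∞} (hf : Measurable f)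
    (hf1 : eLpNorm f 2 μ ≤ 1) : eLpNorm (kernelOp μ κ f) 2 μ ≤ opNorm μ κ := by
  rw [eLpNorm_two_eq] at hf1 ⊢
  exact le_iSup₂_of_le f hf (le_iSup_of_le hf1 le_rfl)

lemma eLpNorm_kernelOp_le {f : S → ℝ≥0∞} (hf : Measurable f) (hfin : eLpNorm f 2 μ ≠ ⊤) :
    eLpNorm (kernelOp μ κ f) 2 μ ≤ opNorm μ κ * eLpNorm f 2 μ := by
  set r := eLpNorm f 2 μ
  rcases eq_or_ne r 0 with hr | hr
  · have hf0 : f =ᵐ[μ] 0 := (eLpNorm_eq_zero_iff hf.aestronglyMeasurable two_ne_zero).mp hr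
    have hT : kernelOp μ κ f = 0 :=
      funext fun x => (lintegral_congr_ae (hf0.mono fun y hy => by simp [hy])).trans lintegral_zero
    simp [hT]
  have hinv : r⁻¹ ≠ ⊤ := ENNReal.inv_ne_top.mpr hr
  have hunit : eLpNorm (fun y => r⁻¹ * f y) 2 μ ≤ 1 :=
    (eLpNorm_const_mul_le hinv f 2).trans (ENNReal.inv_mul_cancel hr hfin).le
  have hscaled := eLpNorm_kernelOp_le_opNorm (κ := κ) (hf.const_mul _) hunit
  rw [kernelOp_const_mul hinv] at hscaled
  calc eLpNorm (kernelOp μ κ f) 2 μ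
      = eLpNorm (fun x => r * (r⁻¹ * kernelOp μ κ f x)) 2 μ := by
        simp_rw [← mul_assoc, ENNReal.mul_inv_cancel hr hfin, one_mul]
    _ ≤ r * eLpNorm (fun x => r⁻¹ * kernelOp μ κ f x) 2 μ := eLpNorm_const_mul_le hfin _ _
    _ ≤ r * opNorm μ κ := mul_le_mul_right hscaled r
    _ = opNorm μ κ * r := mul_comm _ _

lemma monotone_Phi (z : ℝ) : Monotone (Phi μ κ z) :=
  fun _ _ hfg x => mul_le_mul_right
    (monotone_eexp (monotone_kernelOp (fun y => tsub_le_tsub_right (hfg y) 1) x)) _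

lemma Phi_iSup (hκ : Measurable (Function.uncurry κ)) (z : ℝ) {F : ℕ → S → ℝ≥0∞}
    (hF : ∀ n, Measurable (F n)) (hmono : Monotone F) :
    Phi μ κ z (⨆ n, F n) = ⨆ n, Phi μ κ z (F n) := by
  have hsub : (⨆ n, F n) - 1 = ⨆ n, (F n - 1) := by
    funext y
    simp only [Pi.sub_apply, iSup_apply, Pi.one_apply, ENNReal.iSup_sub]
  funext x
  rw [Phi_eq_kernelOp, hsub, kernelOp_iSup (F := fun n => F n - 1) hκ
    (fun n => (hF n).sub measurable_const) fun m n hmn => tsub_le_tsub_right (hmono hmn) 1]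
  simp only [iSup_apply, eexp_iSup, ENNReal.mul_iSup]
  rfl

end Operator

section Iteration

variable {S : Type*} [MeasurableSpace S] {μ : Measure S} {κ : S → S → ℝ} {B c z ρ : ℝ}

def l2BallAroundOne (μ : Measure S) (c : ℝ) : Set (S → ℝ≥0∞) :=
  {f | Measurable f ∧ 1 ≤ f ∧ eLpNorm (f - 1) 2 μ ≤ ENNReal.ofReal c}

lemma one_mem_l2BallAroundOne : (1 : S → ℝ≥0∞) ∈ l2BallAroundOne μ c :=
  ⟨measurable_const, le_rfl, by simp⟩

variable [IsProbabilityMeasure μ]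

lemma kernelOp_sub_one_le (hB : ∀ x y, κ x y ≤ B) (hB0 : 0 ≤ B) {f : S → ℝ≥0∞}
    (hf : f ∈ l2BallAroundOne μ c) (x : S) :
    kernelOp μ κ (f - 1) x ≤ ENNReal.ofReal (B * c) :=
  (kernelOp_le_mul_eLpNorm hB (hf.1.sub measurable_const) x).trans <|
    (mul_le_mul_right hf.2.2 _).trans (ENNReal.ofReal_mul hB0).ge

lemma Phi_le_of_mem (hB : ∀ x y, κ x y ≤ B) (hB0 : 0 ≤ B) (hc : 0 ≤ c) {f : S → ℝ≥0∞}
    (hf : f ∈ l2BallAroundOne μ c) (x : S) :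
    Phi μ κ z f x ≤ ENNReal.ofReal (z * Real.exp (B * c)) :=
  ofReal_mul_eexp_le (mul_nonneg hB0 hc) (kernelOp_sub_one_le hB hB0 hf x)

lemma eLpNorm_Phi_sub_one_le (hκ : Measurable (Function.uncurry κ)) (hB : ∀ x y, κ x y ≤ B)
    (hB0 : 0 ≤ B) (hc : 0 ≤ c) (hz : 1 ≤ z) (hρ : opNorm μ κ ≤ ENNReal.ofReal ρ) (hρ0 : 0 ≤ ρ)
    {f : S → ℝ≥0∞} (hf : f ∈ l2BallAroundOne μ c) :
    eLpNorm (Phi μ κ z f - 1) 2 μ ≤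
      ENNReal.ofReal ((z - 1) * Real.exp (B * c) + Real.exp (B * c) * (ρ * c)) := by
  have ht : Measurable (kernelOp μ κ (f - 1)) :=
    measurable_kernelOp hκ (hf.1.sub measurable_const)
  have hpt : ∀ x, (Phi μ κ z f - 1) x ≤ ENNReal.ofReal ((z - 1) * Real.exp (B * c))
      + ENNReal.ofReal (Real.exp (B * c)) * kernelOp μ κ (f - 1) x :=
    fun x => ofReal_mul_eexp_sub_one_le hz (mul_nonneg hB0 hc) (kernelOp_sub_one_le hB hB0 hf x)
  have hfin : eLpNorm (f - 1) 2 μ ≠ ⊤ := ne_top_of_le_ne_top ENNReal.ofReal_ne_top hf.2.2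
  calc eLpNorm (Phi μ κ z f - 1) 2 μ
      ≤ eLpNorm (fun x => ENNReal.ofReal ((z - 1) * Real.exp (B * c))
          + ENNReal.ofReal (Real.exp (B * c)) * kernelOp μ κ (f - 1) x) 2 μ :=
        eLpNorm_mono_ennreal hpt 2
    _ ≤ ENNReal.ofReal ((z - 1) * Real.exp (B * c))
          + eLpNorm (fun x => ENNReal.ofReal (Real.exp (B * c)) * kernelOp μ κ (f - 1) x) 2 μ :=
        eLpNorm_const_add_le one_le_two _ (ht.const_mul _).aemeasurable
    _ ≤ ENNReal.ofReal ((z - 1) * Real.exp (B * c))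
          + ENNReal.ofReal (Real.exp (B * c)) * (ENNReal.ofReal ρ * ENNReal.ofReal c) := by
        refine add_le_add_right ((eLpNorm_const_mul_le ENNReal.ofReal_ne_top _ _).trans
          (mul_le_mul_right ?_ _)) _
        exact (eLpNorm_kernelOp_le (hf.1.sub measurable_const) hfin).trans
          (mul_le_mul' hρ hf.2.2)
    _ = _ := by
        rw [← ENNReal.ofReal_mul hρ0, ← ENNReal.ofReal_mul (Real.exp_pos _).le,
          ← ENNReal.ofReal_add (mul_nonneg (by linarith) (Real.exp_pos _).le)
            (mul_nonneg (Real.exp_pos _).le (mul_nonneg hρ0 hc))]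

lemma Phi_mem_l2BallAroundOne (hκ : Measurable (Function.uncurry κ)) (hB : ∀ x y, κ x y ≤ B)
    (hB0 : 0 ≤ B) (hc : 0 ≤ c) (hz : 1 ≤ z) (hρ : opNorm μ κ ≤ ENNReal.ofReal ρ) (hρ0 : 0 ≤ ρ)
    (hzc : (z - 1) * Real.exp (B * c) + Real.exp (B * c) * (ρ * c) ≤ c)
    {f : S → ℝ≥0∞} (hf : f ∈ l2BallAroundOne μ c) : Phi μ κ z f ∈ l2BallAroundOne μ c :=
  ⟨measurable_const.mul
      (continuous_eexp.measurable.comp (measurable_kernelOp hκ (hf.1.sub measurable_const))),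
    fun _ => one_le_ofReal_mul_eexp hz,
    (eLpNorm_Phi_sub_one_le hκ hB hB0 hc hz hρ hρ0 hf).trans (ENNReal.ofReal_le_ofReal hzc)⟩

end Iteration

theorem stmt6_general {S : Type*} [MeasurableSpace S]
    (μ : Measure S) [IsProbabilityMeasure μ]
    (κ : S → S → ℝ) (hκmeas : Measurable (Function.uncurry κ))
    (hκsup : ∃ B : ℝ, ∀ x y, κ x y ≤ B)
    (hnorm : opNorm μ κ < 1) :
    ∃ z : ℝ, 1 < z ∧ ∃ f : S → ℝ≥0∞, Measurable f ∧ (∀ x, 1 ≤ f x) ∧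
      (∀ᵐ x ∂μ, f x ≠ ⊤) ∧ (∀ᵐ x ∂μ, Phi μ κ z f x = f x) := by
  obtain ⟨B, hB⟩ := hκsup
  have hB' : ∀ x y, κ x y ≤ max B 0 := fun x y => (hB x y).trans (le_max_left _ _)
  have hρ : opNorm μ κ ≤ ENNReal.ofReal (opNorm μ κ).toReal := (ENNReal.ofReal_toReal (ne_top_of_lt hnorm)).ge
  have hρ1 : (opNorm μ κ).toReal < 1 := ENNReal.toReal_lt_of_lt_ofReal (by simpa using hnorm)
  obtain ⟨c, hc, z, hz, hzc⟩ := exists_radius_and_parameter (B := max B 0) hρ1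
  set F : ℕ → S → ℝ≥0∞ := fun n => (Phi μ κ z)^[n] 1
  have hF : ∀ n, F n ∈ l2BallAroundOne μ c := by
    intro n
    induction n with
    | zero => exact one_mem_l2BallAroundOne
    | succ n ih =>
      simp only [F, Function.iterate_succ_apply']
      exact Phi_mem_l2BallAroundOne hκmeas hB' (le_max_right _ _) hc.le hz.le hρ
        ENNReal.toReal_nonneg hzc ih
  have hFmono : Monotone F := (monotone_Phi z).monotone_iterate_of_le_map (hF 1).2.1
  have hlim := Phi_iSup (μ := μ) hκmeas z (fun n => (hF n).1) hFmono
  have hfix : Phi μ κ z (⨆ n, F n) = ⨆ n, F n := by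
    rw [hlim, ← hFmono.iSup_nat_add 1]
    simp only [F, Function.iterate_succ_apply']
  have hmeas : Measurable (⨆ n, F n) := by
    convert Measurable.iSup fun n => (hF n).1 using 1
    exact funext fun x => iSup_apply
  refine ⟨z, hz, ⨆ n, F n, hmeas, fun x => iSup_apply (f := F) ▸ le_iSup_of_le 0 le_rfl,
    ae_of_all _ fun x => ?_, ae_of_all _ fun x => congrFun hfix x⟩
  rw [← hfix, hlim, iSup_apply]
  exact ne_top_of_le_ne_top ENNReal.ofReal_ne_top
    (iSup_le fun n => Phi_le_of_mem hB' (le_max_right _ _) hc.le (hF n) x)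

theorem stmt6 {S : Type*} [MeasurableSpace S] [MetricSpace S] [BorelSpace S]
    [TopologicalSpace.SeparableSpace S]
    (μ : Measure S) [IsProbabilityMeasure μ]
    (κ : S → S → ℝ) (hκmeas : Measurable (Function.uncurry κ))
    (hκsymm : ∀ x y, κ x y = κ y x)
    (hκinf : ∃ b : ℝ, 0 < b ∧ ∀ x y, b ≤ κ x y)
    (hκsup : ∃ B : ℝ, ∀ x y, κ x y ≤ B)
    (hκ2 : ∀ x, Integrable (fun y => κ x y ^ 2) μ)
    (ψ : S → ℝ) (hψ : ∀ x, ψ x = Real.sqrt (∫ y, κ x y ^ 2 ∂μ))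
    (a : ℝ) (ha : 0 < a)
    (hexp : Integrable (fun x => Real.exp (a * ψ x)) μ)
    (hnorm : opNorm μ κ < 1) :
    ∃ z : ℝ, 1 < z ∧ ∃ f : S → ℝ≥0∞, Measurable f ∧ (∀ x, 1 ≤ f x) ∧
      (∀ᵐ x ∂μ, f x ≠ ⊤) ∧ (∀ᵐ x ∂μ, Phi μ κ z f x = f x) :=
  stmt6_general μ κ hκmeas hκsup hnorm
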